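/- arXiv:1311.6402 — 5 statements merged into one kernel-verified Lean document; each statement's English description precedes it below -/
import Mathlib

section
/- Let P₁, Q₁ be complex matrices of compatible sizes, δ₁ ≥ 0, and u a vector. Then max over all matrices Z₁ with spectral norm ‖Z₁‖ ≤ δ₁ of 2·Re(u^H P₁^H Z₁ Q₁ u) equals 2 δ₁ ‖P₁ u‖ ‖Q₁ u‖. -/
/-! With `a = P₁ u` and `b = Q₁ u` the objective is `2 Re ⟪a, Z₁ b⟫`, which Cauchy–Schwarz and
`‖Z₁ b‖ ≤ δ₁ ‖b‖` bound by `2 δ₁ ‖a‖ ‖b‖`. The rank-one matrix `δ₁ a bᴴ / (‖a‖ ‖b‖)` has spectral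
norm `δ₁` and attains the bound. -/

open Matrix

/-- `‖A‖ ≤ δ` in the spectral (operator) norm, encoded as
`‖A v‖ ≤ δ ‖v‖` for all `v` (squared form). -/
def specNormLe {p q : ℕ} (δ : ℝ) (A : Matrix (Fin p) (Fin q) ℂ) : Prop :=
  ∀ v : Fin q → ℂ, ∑ i, Complex.normSq ((A *ᵥ v) i) ≤ δ ^ 2 * ∑ j, Complex.normSq (v j)

open WithLp

section
variable {m n : Type*} [Fintype n]

lemma sum_normSq_eq_norm_toLp_sq (x : n → ℂ) :
    ∑ i, Complex.normSq (x i) = ‖toLp 2 x‖ ^ 2 := by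
  simp [EuclideanSpace.norm_sq_eq, Complex.normSq_eq_norm_sq]

lemma star_dotProduct_eq_inner (x y : n → ℂ) : star x ⬝ᵥ y = inner ℂ (toLp 2 x) (toLp 2 y) := by
  rw [EuclideanSpace.inner_toLp_toLp, dotProduct_comm]

lemma norm_star_dotProduct_le (x y : n → ℂ) :
    ‖star x ⬝ᵥ y‖ ≤ ‖toLp 2 x‖ * ‖toLp 2 y‖ := by
  rw [star_dotProduct_eq_inner]
  exact norm_inner_le_norm _ _

lemma star_dotProduct_self (x : n → ℂ) : star x ⬝ᵥ x = ((‖toLp 2 x‖ ^ 2 : ℝ) : ℂ) := by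
  rw [star_dotProduct_eq_inner, inner_self_eq_norm_sq_to_K]
  push_cast
  rfl

lemma vecMulVec_star_mulVec (a : m → ℂ) (b v : n → ℂ) :
    vecMulVec a (star b) *ᵥ v = (star b ⬝ᵥ v) • a := by
  rw [vecMulVec_mulVec, op_smul_eq_smul]

variable [Fintype m]

lemma norm_toLp_vecMulVec_star_mulVec_le (a : m → ℂ) (b v : n → ℂ) :
    ‖toLp 2 (vecMulVec a (star b) *ᵥ v)‖ ≤ ‖toLp 2 a‖ * ‖toLp 2 b‖ * ‖toLp 2 v‖ := by
  rw [vecMulVec_star_mulVec, WithLp.toLp_smul, norm_smul, mul_comm, mul_assoc]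
  exact mul_le_mul_of_nonneg_left (norm_star_dotProduct_le b v) (norm_nonneg _)

lemma star_dotProduct_vecMulVec_star_mulVec (a : m → ℂ) (b : n → ℂ) :
    star a ⬝ᵥ (vecMulVec a (star b) *ᵥ b) = ((‖toLp 2 a‖ * ‖toLp 2 b‖) ^ 2 : ℝ) := by
  rw [vecMulVec_star_mulVec, dotProduct_smul, star_dotProduct_self, star_dotProduct_self,
    smul_eq_mul]
  push_cast
  ring

end

section
variable {p q : ℕ} {δ : ℝ}

lemma specNormLe_iff (hδ : 0 ≤ δ) (A : Matrix (Fin p) (Fin q) ℂ) :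
    specNormLe δ A ↔ ∀ v, ‖toLp 2 (A *ᵥ v)‖ ≤ δ * ‖toLp 2 v‖ := by
  simp only [specNormLe, sum_normSq_eq_norm_toLp_sq, ← mul_pow]
  exact forall_congr' fun v => pow_le_pow_iff_left₀ (norm_nonneg _) (by positivity) two_ne_zero

lemma re_star_dotProduct_mulVec_le (hδ : 0 ≤ δ) {Z : Matrix (Fin p) (Fin q) ℂ}
    (hZ : specNormLe δ Z) (a : Fin p → ℂ) (b : Fin q → ℂ) :
    (star a ⬝ᵥ (Z *ᵥ b)).re ≤ δ * ‖toLp 2 a‖ * ‖toLp 2 b‖ :=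
  calc (star a ⬝ᵥ (Z *ᵥ b)).re ≤ ‖star a ⬝ᵥ (Z *ᵥ b)‖ := Complex.re_le_norm _
    _ ≤ ‖toLp 2 a‖ * ‖toLp 2 (Z *ᵥ b)‖ := norm_star_dotProduct_le _ _
    _ ≤ ‖toLp 2 a‖ * (δ * ‖toLp 2 b‖) :=
      mul_le_mul_of_nonneg_left ((specNormLe_iff hδ Z).1 hZ b) (norm_nonneg _)
    _ = δ * ‖toLp 2 a‖ * ‖toLp 2 b‖ := by ring

lemma exists_specNormLe_re_star_dotProduct_mulVec_eq (hδ : 0 ≤ δ) (a : Fin p → ℂ)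
    (b : Fin q → ℂ) :
    ∃ Z : Matrix (Fin p) (Fin q) ℂ, specNormLe δ Z ∧
      (star a ⬝ᵥ (Z *ᵥ b)).re = δ * ‖toLp 2 a‖ * ‖toLp 2 b‖ := by
  set N := ‖toLp 2 a‖ * ‖toLp 2 b‖
  -- if `N = 0` then `δ / N = 0`, and the zero matrix below is the maximizer
  have hN : 0 ≤ N := by positivity
  have hcoef : δ / N * N ≤ δ ∧ δ / N * N ^ 2 = δ * N := by
    rcases hN.eq_or_lt with h | h
    · simp [← h, hδ]
    · constructor
      · rw [div_mul_cancel₀ δ h.ne']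
      · field_simp
  refine ⟨((δ / N : ℝ) : ℂ) • vecMulVec a (star b), (specNormLe_iff hδ _).2 fun v => ?_, ?_⟩
  · rw [smul_mulVec, WithLp.toLp_smul, norm_smul, Complex.norm_real,
      Real.norm_of_nonneg (by positivity)]
    calc δ / N * ‖toLp 2 (vecMulVec a (star b) *ᵥ v)‖ ≤ δ / N * (N * ‖toLp 2 v‖) :=
          mul_le_mul_of_nonneg_left (norm_toLp_vecMulVec_star_mulVec_le a b v) (by positivity)
      _ = δ / N * N * ‖toLp 2 v‖ := by ring
      _ ≤ δ * ‖toLp 2 v‖ := mul_le_mul_of_nonneg_right hcoef.1 (norm_nonneg _)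
  · rw [smul_mulVec, dotProduct_smul, star_dotProduct_vecMulVec_star_mulVec, smul_eq_mul,
      ← Complex.ofReal_mul, Complex.ofReal_re, hcoef.2, mul_assoc]

end

lemma star_dotProduct_conjTranspose_mul_mul_mulVec {R l m n : Type*} [Semiring R] [StarRing R]
    [Fintype l] [Fintype m] [Fintype n]
    (P : Matrix m l R) (Z : Matrix m n R) (Q : Matrix n l R) (u : l → R) :
    star u ⬝ᵥ ((Pᴴ * Z * Q) *ᵥ u) = star (P *ᵥ u) ⬝ᵥ (Z *ᵥ (Q *ᵥ u)) := by
  rw [← mulVec_mulVec, ← mulVec_mulVec, dotProduct_mulVec, ← star_mulVec]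

/-- The maximum of `2 Re(uᴴ P₁ᴴ Z₁ Q₁ u)` over all `Z₁` with spectral norm `≤ δ₁`
equals `2 δ₁ ‖P₁ u‖ ‖Q₁ u‖`. -/
theorem stmt_6 (p q k : ℕ) (P₁ : Matrix (Fin p) (Fin k) ℂ) (Q₁ : Matrix (Fin q) (Fin k) ℂ)
    (u : Fin k → ℂ) (δ₁ : ℝ) (hδ₁ : 0 ≤ δ₁) :
    IsGreatest {r : ℝ | ∃ Z₁ : Matrix (Fin p) (Fin q) ℂ, specNormLe δ₁ Z₁ ∧
        r = 2 * (star u ⬝ᵥ ((P₁ᴴ * Z₁ * Q₁) *ᵥ u)).re}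
      (2 * δ₁ * Real.sqrt (∑ i, Complex.normSq ((P₁ *ᵥ u) i)) *
        Real.sqrt (∑ i, Complex.normSq ((Q₁ *ᵥ u) i))) := by
  simp only [sum_normSq_eq_norm_toLp_sq, Real.sqrt_sq (norm_nonneg _), mul_assoc,
    star_dotProduct_conjTranspose_mul_mul_mulVec]
  constructor
  · obtain ⟨Z, hZ, hval⟩ :=
      exists_specNormLe_re_star_dotProduct_mulVec_eq hδ₁ (P₁ *ᵥ u) (Q₁ *ᵥ u)
    exact ⟨Z, hZ, by rw [hval, mul_assoc]⟩
  · rintro r ⟨Z, hZ, rfl⟩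
    have hle := re_star_dotProduct_mulVec_le hδ₁ hZ (P₁ *ᵥ u) (Q₁ *ᵥ u)
    rw [mul_assoc] at hle
    linarith
end

section
/- Let N be a Hermitian matrix and P₁,Q₁,P₂,Q₂ matrices of compatible sizes, δ₁,δ₂ ≥ 0. Then N ⪰ P₁^H Z₁ Q₁ + Q₁^H Z₁^H P₁ + P₂^H Z₂ Q₂ + Q₂^H Z₂^H P₂ for all Z₁,Z₂ with ‖Z₁‖ ≤ δ₁, ‖Z₂‖ ≤ δ₂, if and only if for every vector u: u^H N u ≥ 2δ₁‖P₁u‖‖Q₁u‖ + 2δ₂‖P₂u‖‖Q₂u‖. -/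
/-!
The quadratic form of `Pᴴ Z Q + Qᴴ Zᴴ P` at `u` is `2 Re ⟪P u, Z (Q u)⟫`. By Cauchy–Schwarz this
is at most `2 ‖Z‖ ‖P u‖ ‖Q u‖`, and for fixed `u` the bound is attained by the rank-one matrix
`Z = δ (P u) (Q u)ᴴ / (‖P u‖ ‖Q u‖)` of spectral norm `δ`. Since `Z₁` and `Z₂` can be chosen
independently for each `u`, the quadratic form of the perturbed matrix is nonnegative at `u` for all
admissible `Z₁, Z₂` exactly when the scalar inequality holds at `u`.
-/

open Matrix
open scoped ComplexOrder

open WithLp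
open scoped Matrix.Norms.L2Operator

namespace Matrix

variable {ι κ μ ν μ₁ ν₁ μ₂ ν₂ α 𝕜 : Type*}

section StarRing

variable [CommSemiring α] [StarRing α]

lemma conjTranspose_conjTranspose_mul_mul [Fintype μ] [Fintype ν]
    (P : Matrix μ ι α) (Z : Matrix μ ν α) (Q : Matrix ν ι α) :
    (Pᴴ * Z * Q)ᴴ = Qᴴ * Zᴴ * P := by
  simp only [conjTranspose_mul, conjTranspose_conjTranspose, Matrix.mul_assoc]

lemma isHermitian_sandwich_add_conjTranspose [Fintype μ] [Fintype ν]
    (P : Matrix μ ι α) (Z : Matrix μ ν α) (Q : Matrix ν ι α) :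
    (Pᴴ * Z * Q + Qᴴ * Zᴴ * P).IsHermitian := by
  rw [← conjTranspose_conjTranspose_mul_mul]
  exact isHermitian_add_transpose_self _

lemma star_dotProduct_conjTranspose_mul_mul_mulVec [Fintype ι] [Fintype μ] [Fintype ν]
    (P : Matrix μ ι α) (Z : Matrix μ ν α) (Q : Matrix ν ι α) (u : ι → α) :
    star u ⬝ᵥ ((Pᴴ * Z * Q) *ᵥ u) = star (P *ᵥ u) ⬝ᵥ (Z *ᵥ (Q *ᵥ u)) := by
  rw [← mulVec_mulVec, ← mulVec_mulVec, dotProduct_mulVec, ← star_mulVec]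

end StarRing

variable [Fintype ι] [Fintype κ] [RCLike 𝕜]

lemma star_dotProduct_eq_inner (x y : ι → 𝕜) :
    star x ⬝ᵥ y = inner 𝕜 (toLp 2 x) (toLp 2 y) := by
  rw [EuclideanSpace.inner_toLp_toLp, dotProduct_comm]

lemma star_dotProduct_self (x : ι → 𝕜) : star x ⬝ᵥ x = (‖toLp 2 x‖ : 𝕜) ^ 2 := by
  rw [star_dotProduct_eq_inner, inner_self_eq_norm_sq_to_K]

lemma re_star_dotProduct_conjTranspose_mulVec (M : Matrix ι ι 𝕜) (u : ι → 𝕜) :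
    RCLike.re (star u ⬝ᵥ (Mᴴ *ᵥ u)) = RCLike.re (star u ⬝ᵥ (M *ᵥ u)) := by
  rw [dotProduct_mulVec, ← star_mulVec, star_dotProduct, RCLike.star_def, RCLike.conj_re]

lemma re_star_dotProduct_sandwich_add_conjTranspose_mulVec [Fintype μ] [Fintype ν]
    (P : Matrix μ ι 𝕜) (Z : Matrix μ ν 𝕜) (Q : Matrix ν ι 𝕜) (u : ι → 𝕜) :
    RCLike.re (star u ⬝ᵥ ((Pᴴ * Z * Q + Qᴴ * Zᴴ * P) *ᵥ u))
      = 2 * RCLike.re (star (P *ᵥ u) ⬝ᵥ (Z *ᵥ (Q *ᵥ u))) := by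
  rw [← conjTranspose_conjTranspose_mul_mul, add_mulVec, dotProduct_add, map_add,
    re_star_dotProduct_conjTranspose_mulVec, star_dotProduct_conjTranspose_mul_mul_mulVec]
  ring

lemma re_star_dotProduct_sub_sandwiches_mulVec [Fintype μ₁] [Fintype ν₁]
    [Fintype μ₂] [Fintype ν₂] (N : Matrix ι ι 𝕜)
    (P₁ : Matrix μ₁ ι 𝕜) (Z₁ : Matrix μ₁ ν₁ 𝕜) (Q₁ : Matrix ν₁ ι 𝕜)
    (P₂ : Matrix μ₂ ι 𝕜) (Z₂ : Matrix μ₂ ν₂ 𝕜) (Q₂ : Matrix ν₂ ι 𝕜) (u : ι → 𝕜) :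
    RCLike.re (star u ⬝ᵥ
        ((N - (P₁ᴴ * Z₁ * Q₁ + Q₁ᴴ * Z₁ᴴ * P₁ + (P₂ᴴ * Z₂ * Q₂ + Q₂ᴴ * Z₂ᴴ * P₂))) *ᵥ u))
      = RCLike.re (star u ⬝ᵥ (N *ᵥ u)) - 2 * RCLike.re (star (P₁ *ᵥ u) ⬝ᵥ (Z₁ *ᵥ (Q₁ *ᵥ u)))
        - 2 * RCLike.re (star (P₂ *ᵥ u) ⬝ᵥ (Z₂ *ᵥ (Q₂ *ᵥ u))) := by
  rw [sub_mulVec, add_mulVec, dotProduct_sub, dotProduct_add, map_sub, map_add,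
    re_star_dotProduct_sandwich_add_conjTranspose_mulVec,
    re_star_dotProduct_sandwich_add_conjTranspose_mulVec]
  ring

lemma IsHermitian.posSemidef_iff_re_dotProduct_nonneg {A : Matrix ι ι 𝕜} (hA : A.IsHermitian) :
    A.PosSemidef ↔ ∀ x, 0 ≤ RCLike.re (star x ⬝ᵥ (A *ᵥ x)) := by
  rw [posSemidef_iff_dotProduct_mulVec]
  simp only [RCLike.nonneg_iff (K := 𝕜), hA.im_star_dotProduct_mulVec_self, and_true, hA, true_and]

variable [DecidableEq κ]

lemma l2_opNorm_le_iff {δ : ℝ} (hδ : 0 ≤ δ) (A : Matrix ι κ 𝕜) :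
    ‖A‖ ≤ δ ↔ ∀ v, ‖toLp 2 (A *ᵥ v)‖ ≤ δ * ‖toLp 2 v‖ := by
  rw [l2_opNorm_def, ContinuousLinearMap.opNorm_le_iff hδ]
  exact ⟨fun h v => h (toLp 2 v), fun h x => h (ofLp x)⟩

lemma re_star_dotProduct_mulVec_le_of_l2_opNorm_le {δ : ℝ} {Z : Matrix ι κ 𝕜} (hZ : ‖Z‖ ≤ δ)
    (x : ι → 𝕜) (y : κ → 𝕜) :
    RCLike.re (star x ⬝ᵥ (Z *ᵥ y)) ≤ δ * ‖toLp 2 x‖ * ‖toLp 2 y‖ :=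
  calc RCLike.re (star x ⬝ᵥ (Z *ᵥ y))
      ≤ ‖toLp 2 x‖ * ‖toLp 2 (Z *ᵥ y)‖ := by
        rw [star_dotProduct_eq_inner]; exact re_inner_le_norm _ _
    _ ≤ ‖toLp 2 x‖ * (‖Z‖ * ‖toLp 2 y‖) := by gcongr; exact l2_opNorm_mulVec Z (toLp 2 y)
    _ ≤ δ * ‖toLp 2 x‖ * ‖toLp 2 y‖ := by rw [mul_left_comm, ← mul_assoc]; gcongr

lemma l2_opNorm_vecMulVec_star_le (x : ι → 𝕜) (y : κ → 𝕜) :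
    ‖vecMulVec x (star y)‖ ≤ ‖toLp 2 x‖ * ‖toLp 2 y‖ := by
  rw [l2_opNorm_le_iff (by positivity)]
  intro v
  rw [vecMulVec_mulVec, op_smul_eq_smul, WithLp.toLp_smul, norm_smul, star_dotProduct_eq_inner]
  calc ‖inner 𝕜 (toLp 2 y) (toLp 2 v)‖ * ‖toLp 2 x‖
      ≤ ‖toLp 2 y‖ * ‖toLp 2 v‖ * ‖toLp 2 x‖ := by gcongr; exact norm_inner_le_norm _ _
    _ = ‖toLp 2 x‖ * ‖toLp 2 y‖ * ‖toLp 2 v‖ := by ring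

lemma exists_l2_opNorm_le_star_dotProduct_mulVec_eq {δ : ℝ} (hδ : 0 ≤ δ) (x : ι → 𝕜) (y : κ → 𝕜) :
    ∃ Z : Matrix ι κ 𝕜, ‖Z‖ ≤ δ ∧
      star x ⬝ᵥ (Z *ᵥ y) = ((δ * ‖toLp 2 x‖ * ‖toLp 2 y‖ : ℝ) : 𝕜) := by
  set r := ‖toLp 2 x‖ * ‖toLp 2 y‖ with hr_def
  rcases eq_or_ne r 0 with hr | hr
  · exact ⟨0, by simpa using hδ, by simp [mul_assoc, ← hr_def, hr]⟩
  refine ⟨((δ / r : ℝ) : 𝕜) • vecMulVec x (star y), ?_, ?_⟩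
  · calc ‖((δ / r : ℝ) : 𝕜) • vecMulVec x (star y)‖ ≤ δ / r * r := by
          rw [norm_smul, RCLike.norm_ofReal, abs_of_nonneg (by positivity)]
          gcongr; exact l2_opNorm_vecMulVec_star_le x y
      _ = δ := div_mul_cancel₀ δ hr
  · rw [smul_mulVec, vecMulVec_mulVec, op_smul_eq_smul, dotProduct_smul, dotProduct_smul,
      star_dotProduct_self, star_dotProduct_self, smul_eq_mul, smul_eq_mul]
    have hx : ‖toLp 2 x‖ ≠ 0 := left_ne_zero_of_mul hr
    have hy : ‖toLp 2 y‖ ≠ 0 := right_ne_zero_of_mul hr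
    norm_cast
    rw [hr_def]
    field_simp

end Matrix

lemma sqrt_sum_normSq_eq_norm {ι : Type*} [Fintype ι] (v : ι → ℂ) :
    √(∑ i, Complex.normSq (v i)) = ‖toLp 2 v‖ := by
  simp [EuclideanSpace.norm_eq, Complex.normSq_eq_norm_sq]

lemma specNormLe_iff_l2_opNorm_le {p q : ℕ} {δ : ℝ} (hδ : 0 ≤ δ) (A : Matrix (Fin p) (Fin q) ℂ) :
    specNormLe δ A ↔ ‖A‖ ≤ δ := by
  rw [l2_opNorm_le_iff hδ]
  refine forall_congr' fun v => ?_
  have hv : 0 ≤ ∑ j, Complex.normSq (v j) := Finset.sum_nonneg fun _ _ => Complex.normSq_nonneg _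
  rw [← sqrt_sum_normSq_eq_norm, ← sqrt_sum_normSq_eq_norm,
    ← Real.sqrt_le_sqrt_iff (mul_nonneg (sq_nonneg δ) hv), Real.sqrt_mul' _ hv, Real.sqrt_sq hδ]

/-- `N ⪰ P₁ᴴZ₁Q₁ + Q₁ᴴZ₁ᴴP₁ + P₂ᴴZ₂Q₂ + Q₂ᴴZ₂ᴴP₂` for all `‖Z₁‖ ≤ δ₁`, `‖Z₂‖ ≤ δ₂`
iff `uᴴ N u ≥ 2δ₁‖P₁u‖‖Q₁u‖ + 2δ₂‖P₂u‖‖Q₂u‖` for all `u`. -/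
theorem stmt_7 (p₁ q₁ p₂ q₂ k : ℕ) (N : Matrix (Fin k) (Fin k) ℂ) (hN : N.IsHermitian)
    (P₁ : Matrix (Fin p₁) (Fin k) ℂ) (Q₁ : Matrix (Fin q₁) (Fin k) ℂ)
    (P₂ : Matrix (Fin p₂) (Fin k) ℂ) (Q₂ : Matrix (Fin q₂) (Fin k) ℂ)
    (δ₁ δ₂ : ℝ) (hδ₁ : 0 ≤ δ₁) (hδ₂ : 0 ≤ δ₂) :
    (∀ (Z₁ : Matrix (Fin p₁) (Fin q₁) ℂ) (Z₂ : Matrix (Fin p₂) (Fin q₂) ℂ),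
        specNormLe δ₁ Z₁ → specNormLe δ₂ Z₂ →
        (N - (P₁ᴴ * Z₁ * Q₁ + Q₁ᴴ * Z₁ᴴ * P₁ + P₂ᴴ * Z₂ * Q₂ + Q₂ᴴ * Z₂ᴴ * P₂)).PosSemidef)
    ↔ (∀ u : Fin k → ℂ,
        2 * δ₁ * Real.sqrt (∑ i, Complex.normSq ((P₁ *ᵥ u) i)) *
            Real.sqrt (∑ i, Complex.normSq ((Q₁ *ᵥ u) i)) +
          2 * δ₂ * Real.sqrt (∑ i, Complex.normSq ((P₂ *ᵥ u) i)) *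
            Real.sqrt (∑ i, Complex.normSq ((Q₂ *ᵥ u) i))
          ≤ (star u ⬝ᵥ (N *ᵥ u)).re) := by
  simp only [sqrt_sum_normSq_eq_norm, specNormLe_iff_l2_opNorm_le hδ₁,
    specNormLe_iff_l2_opNorm_le hδ₂, ← RCLike.re_to_complex, add_assoc (_ + _)]
  constructor
  · intro h u
    obtain ⟨Z₁, hZ₁, hxy₁⟩ := exists_l2_opNorm_le_star_dotProduct_mulVec_eq hδ₁ (P₁ *ᵥ u) (Q₁ *ᵥ u)
    obtain ⟨Z₂, hZ₂, hxy₂⟩ := exists_l2_opNorm_le_star_dotProduct_mulVec_eq hδ₂ (P₂ *ᵥ u) (Q₂ *ᵥ u)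
    have hpos := (h Z₁ Z₂ hZ₁ hZ₂).re_dotProduct_nonneg u
    rw [re_star_dotProduct_sub_sandwiches_mulVec, hxy₁, hxy₂, RCLike.ofReal_re,
      RCLike.ofReal_re] at hpos
    linarith
  · intro h Z₁ Z₂ hZ₁ hZ₂
    have hS := (isHermitian_sandwich_add_conjTranspose P₁ Z₁ Q₁).add
      (isHermitian_sandwich_add_conjTranspose P₂ Z₂ Q₂)
    refine (hN.sub hS).posSemidef_iff_re_dotProduct_nonneg.2 fun u => ?_
    rw [re_star_dotProduct_sub_sandwiches_mulVec]
    linarith [h u, re_star_dotProduct_mulVec_le_of_l2_opNorm_le hZ₁ (P₁ *ᵥ u) (Q₁ *ᵥ u),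
      re_star_dotProduct_mulVec_le_of_l2_opNorm_le hZ₂ (P₂ *ᵥ u) (Q₂ *ᵥ u)]
end

section
/- Let H ∈ ℂ^{m×n} have full column rank, y ∈ ℂ^m, P = I − HH⁺. Then the Fréchet derivative of the map H̃ ↦ y^H (I − H̃ H̃⁺) y at H̃ = H, applied to a perturbation ΔH ∈ ℂ^{m×n}, equals −2 Re( (H⁺y)^H (ΔH)^H P y ) = 2 Re( Tr( (−P y (H⁺y)^H)^H ΔH ) ); equivalently the matrix gradient is D = −P y (H⁺ y)^H. -/
/-!
Write `H⁺ = (Hᴴ H)⁻¹ Hᴴ` and `P = I - H H⁺`. The product rule together with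
`d(X⁻¹) = -X⁻¹ dX X⁻¹` shows that the derivative of the projector `M ↦ M M⁺` at `H` in the
direction `Δ` is `K + Kᴴ` with `K = P Δ H⁺`. The real part of the quadratic form of `K + Kᴴ`
is twice that of `K`, and `yᴴ K y` is the conjugate of `(Δ H⁺ y)ᴴ P y` because `P` is Hermitian.
-/

open Matrix
open scoped ComplexOrder

attribute [local instance] Matrix.normedAddCommGroup Matrix.normedSpace

namespace Matrix

theorem isUnit_of_rank_eq_card {K n : Type*} [Field K] [Fintype n] [DecidableEq n]
    {A : Matrix n n K} (h : A.rank = Fintype.card n) : IsUnit A := by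
  rw [← mulVec_surjective_iff_isUnit, ← coe_mulVecLin, ← LinearMap.range_eq_top]
  apply Submodule.eq_top_of_finrank_eq
  rwa [Module.finrank_fintype_fun_eq_card]

variable {𝕂 : Type*} [RCLike 𝕂] {l m n : Type*} [Fintype l] [Fintype m] [Fintype n]
  {E : Type*} [NormedAddCommGroup E] [NormedSpace ℝ E]

noncomputable def mulCLM : Matrix l m 𝕂 →L[ℝ] Matrix m n 𝕂 →L[ℝ] Matrix l n 𝕂 :=
  (mulLinearMap ℝ).toContinuousBilinearMap

noncomputable def conjTransposeCLM : Matrix m n 𝕂 →L[ℝ] Matrix n m 𝕂 :=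
  LinearMap.toContinuousLinearMap
    { toFun := conjTranspose
      map_add' := conjTranspose_add
      map_smul' := fun c A => by simp [conjTranspose_smul] }

noncomputable def quadFormCLM (y : m → 𝕂) : Matrix m m 𝕂 →L[ℝ] 𝕂 :=
  LinearMap.toContinuousLinearMap
    { toFun := fun G => star y ⬝ᵥ (G *ᵥ y)
      map_add' := fun A B => by rw [add_mulVec, dotProduct_add]
      map_smul' := fun c A => by simp [smul_mulVec] }

theorem _root_.HasFDerivAt.matrix_mul {f : E → Matrix l m 𝕂} {g : E → Matrix m n 𝕂}
    {f' : E →L[ℝ] Matrix l m 𝕂} {g' : E →L[ℝ] Matrix m n 𝕂} {x : E}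
    (hf : HasFDerivAt f f' x) (hg : HasFDerivAt g g' x) :
    HasFDerivAt (fun x => f x * g x)
      (mulCLM (f x) ∘L g' + (mulCLM.flip (g x) ∘L f' : E →L[ℝ] Matrix l n 𝕂)) x :=
  (mulCLM.hasFDerivAt_of_bilinear hf hg).congr_fderiv (by ext v : 1; rfl)

theorem _root_.HasFDerivAt.matrix_conjTranspose {f : E → Matrix m n 𝕂}
    {f' : E →L[ℝ] Matrix m n 𝕂} {x : E} (hf : HasFDerivAt f f' x) :
    HasFDerivAt (fun x => (f x)ᴴ) (conjTransposeCLM ∘L f') x :=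
  (conjTransposeCLM (𝕂 := 𝕂) (m := m) (n := n)).hasFDerivAt.comp x hf

theorem hasFDerivAt_nonsing_inv [DecidableEq n] {A : Matrix n n 𝕂} (hA : IsUnit A) :
    HasFDerivAt (fun X : Matrix n n 𝕂 => X⁻¹) (-(mulCLM A⁻¹ ∘L mulCLM.flip A⁻¹)) A := by
  -- `hasFDerivAt_ringInverse` needs a normed ring; the operator norm induces the same topology
  -- as the entrywise norm, and `HasFDerivAt` only depends on the topology.
  let _ : NormedRing (Matrix n n 𝕂) := Matrix.linftyOpNormedRing
  let _ : NormedAlgebra ℝ (Matrix n n 𝕂) := Matrix.linftyOpNormedAlgebra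
  have : HasSummableGeomSeries (Matrix n n 𝕂) :=
    @instHasSummableGeomSeriesOfCompleteSpace _ _ (by exact instCompleteSpace n n 𝕂)
  obtain ⟨u, rfl⟩ := hA
  simp only [nonsing_inv_eq_ringInverse, Ring.inverse_unit]
  refine (hasFDerivAt_ringInverse (𝕜 := ℝ) u).congr_fderiv ?_
  ext Δ : 1
  exact congrArg Neg.neg (Matrix.mul_assoc _ Δ _)

/-- For `M` of full column rank this is the Moore–Penrose pseudoinverse `M⁺`. -/
noncomputable def leftPinv [DecidableEq n] (M : Matrix m n 𝕂) : Matrix n m 𝕂 :=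
  (Mᴴ * M)⁻¹ * Mᴴ

theorem isHermitian_mul_leftPinv [DecidableEq n] (H : Matrix m n 𝕂) :
    (H * leftPinv H).IsHermitian := by
  rw [leftPinv, ← Matrix.mul_assoc]
  exact isHermitian_mul_mul_conjTranspose H (isHermitian_conjTranspose_mul_self H).inv

theorem conjTranspose_leftPinv [DecidableEq n] (H : Matrix m n 𝕂) :
    (leftPinv H)ᴴ = H * (Hᴴ * H)⁻¹ := by
  rw [leftPinv, conjTranspose_mul, conjTranspose_conjTranspose,
    (isHermitian_conjTranspose_mul_self H).inv.eq]

theorem mul_leftPinv_derivative_eq [DecidableEq m] [DecidableEq n] (H Δ : Matrix m n 𝕂) :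
    H * ((Hᴴ * H)⁻¹ * Δᴴ + -((Hᴴ * H)⁻¹ * ((Hᴴ * Δ + Δᴴ * H) * (Hᴴ * H)⁻¹)) * Hᴴ)
        + Δ * leftPinv H
      = (1 - H * leftPinv H) * Δ * leftPinv H + ((1 - H * leftPinv H) * Δ * leftPinv H)ᴴ := by
  rw [conjTranspose_mul, conjTranspose_mul, conjTranspose_leftPinv,
    (isHermitian_one.sub (isHermitian_mul_leftPinv H)).eq, leftPinv]
  simp only [Matrix.mul_add, Matrix.add_mul, Matrix.mul_sub, Matrix.sub_mul, Matrix.mul_one,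
    Matrix.one_mul, Matrix.neg_mul, Matrix.mul_neg, Matrix.mul_assoc]
  abel

theorem re_star_dotProduct_add_conjTranspose_mulVec (K : Matrix m m 𝕂) (y : m → 𝕂) :
    RCLike.re (star y ⬝ᵥ ((K + Kᴴ) *ᵥ y)) = 2 * RCLike.re (star (K *ᵥ y) ⬝ᵥ y) := by
  have hK : star y ⬝ᵥ (K *ᵥ y) = star (star (K *ᵥ y) ⬝ᵥ y) := star_dotProduct _ _
  have hKH : star y ⬝ᵥ (Kᴴ *ᵥ y) = star (K *ᵥ y) ⬝ᵥ y := by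
    rw [dotProduct_mulVec, ← star_mulVec]
  rw [add_mulVec, dotProduct_add, hK, hKH, map_add, RCLike.star_def, RCLike.conj_re]
  ring

theorem hasFDerivAt_mul_leftPinv [DecidableEq m] [DecidableEq n] {H : Matrix m n 𝕂}
    (hH : IsUnit (Hᴴ * H)) :
    ∃ L : Matrix m n 𝕂 →L[ℝ] Matrix m m 𝕂,
      (∀ Δ, L Δ = (1 - H * leftPinv H) * Δ * leftPinv H
        + ((1 - H * leftPinv H) * Δ * leftPinv H)ᴴ) ∧
      HasFDerivAt (fun M => M * leftPinv M) L H := by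
  have hId := hasFDerivAt_id (𝕜 := ℝ) H
  have hGram : HasFDerivAt (fun M : Matrix m n 𝕂 => Mᴴ * M) _ H :=
    hId.matrix_conjTranspose.matrix_mul hId
  have hInv : HasFDerivAt (fun M : Matrix m n 𝕂 => (Mᴴ * M)⁻¹) _ H :=
    (hasFDerivAt_nonsing_inv hH).comp (f := fun M => Mᴴ * M) H hGram
  have hPinv : HasFDerivAt (fun M : Matrix m n 𝕂 => leftPinv M) _ H :=
    hInv.matrix_mul hId.matrix_conjTranspose
  exact ⟨_, mul_leftPinv_derivative_eq H, hId.matrix_mul hPinv⟩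

theorem hasFDerivAt_re_quadForm_one_sub_mul_leftPinv [DecidableEq m] [DecidableEq n]
    {H : Matrix m n 𝕂} (hH : IsUnit (Hᴴ * H)) (y : m → 𝕂) :
    ∃ L : Matrix m n 𝕂 →L[ℝ] ℝ,
      (∀ Δ, L Δ = -2 * RCLike.re
        (star (Δ *ᵥ (leftPinv H *ᵥ y)) ⬝ᵥ ((1 - H * leftPinv H) *ᵥ y))) ∧
      HasFDerivAt (fun M => RCLike.re (star y ⬝ᵥ ((1 - M * leftPinv M) *ᵥ y))) L H := by
  obtain ⟨L, hL, hProj⟩ := hasFDerivAt_mul_leftPinv hH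
  have hRes := (RCLike.reCLM.comp (quadFormCLM y)).hasFDerivAt.comp H
    ((hasFDerivAt_const 1 H).sub hProj)
  refine ⟨_, fun Δ => ?_, hRes⟩
  have hP : star (((1 - H * leftPinv H) * Δ * leftPinv H) *ᵥ y) ⬝ᵥ y
      = star (Δ *ᵥ (leftPinv H *ᵥ y)) ⬝ᵥ ((1 - H * leftPinv H) *ᵥ y) := by
    rw [Matrix.mul_assoc, ← mulVec_mulVec, ← mulVec_mulVec, star_mulVec, ← dotProduct_mulVec,
      (isHermitian_one.sub (isHermitian_mul_leftPinv H)).eq]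
  calc _ = RCLike.re (star y ⬝ᵥ ((0 - L Δ) *ᵥ y)) := rfl
    _ = _ := by
      rw [zero_sub, neg_mulVec, dotProduct_neg, map_neg, hL,
        re_star_dotProduct_add_conjTranspose_mulVec, hP]
      ring

end Matrix

theorem stmt_13_general (m n : ℕ) (H : Matrix (Fin m) (Fin n) ℂ)
    (hrank : H.rank = n) (y : Fin m → ℂ) :
    ∃ L : Matrix (Fin m) (Fin n) ℂ →L[ℝ] ℝ,
      (∀ ΔH : Matrix (Fin m) (Fin n) ℂ,
        L ΔH = -2 * (star (ΔH *ᵥ (((Hᴴ * H)⁻¹ * Hᴴ) *ᵥ y)) ⬝ᵥ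
          ((1 - H * ((Hᴴ * H)⁻¹ * Hᴴ)) *ᵥ y)).re) ∧
      HasFDerivAt
        (fun M : Matrix (Fin m) (Fin n) ℂ =>
          (star y ⬝ᵥ ((1 - M * ((Mᴴ * M)⁻¹ * Mᴴ)) *ᵥ y)).re)
        L H := by
  have hGram : IsUnit (Hᴴ * H) :=
    isUnit_of_rank_eq_card (by rw [rank_conjTranspose_mul_self, hrank, Fintype.card_fin])
  exact hasFDerivAt_re_quadForm_one_sub_mul_leftPinv hGram y

/-- Lemma 1 of the paper: the Fréchet derivative at `H` of the map
`H̃ ↦ yᴴ (I - H̃ H̃⁺) y` applied to `ΔH` equals `-2 Re((H⁺y)ᴴ (ΔH)ᴴ P y)`;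
equivalently the matrix gradient is `D = -P y (H⁺ y)ᴴ`. -/
theorem stmt_13 (m n : ℕ) (hmn : n ≤ m) (H : Matrix (Fin m) (Fin n) ℂ)
    (hrank : H.rank = n) (y : Fin m → ℂ) :
    ∃ L : Matrix (Fin m) (Fin n) ℂ →L[ℝ] ℝ,
      (∀ ΔH : Matrix (Fin m) (Fin n) ℂ,
        L ΔH = -2 * (star (ΔH *ᵥ (((Hᴴ * H)⁻¹ * Hᴴ) *ᵥ y)) ⬝ᵥ
          ((1 - H * ((Hᴴ * H)⁻¹ * Hᴴ)) *ᵥ y)).re) ∧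
      HasFDerivAt
        (fun M : Matrix (Fin m) (Fin n) ℂ =>
          (star y ⬝ᵥ ((1 - M * ((Mᴴ * M)⁻¹ * Mᴴ)) *ᵥ y)).re)
        L H :=
  stmt_13_general m n H hrank y
end

section
/- Let N be Hermitian, P₁ ∈ ℂ^{p×k}, Q₁ ∈ ℂ^{q×k}, δ ≥ 0. If there exists τ ≥ 0 such that the block matrix [[N − τ Q₁^H Q₁, −δ P₁^H],[−δ P₁, τ I]] is positive semidefinite, then N ⪰ P₁^H Z Q₁ + Q₁^H Z^H P₁ for every Z with spectral norm ‖Z‖ ≤ δ. -/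
/-! Write `Z Q₁ x = δ w` with `‖w‖ ≤ ‖Q₁ x‖` (possible exactly because `‖Z‖ ≤ δ`) and evaluate the
LMI at the vector `(x, w)`: the off-diagonal blocks produce the cross terms `x* P₁ᴴ Z Q₁ x` and
their conjugate, while the two `τ`-blocks leave the remainder `τ (‖Q₁ x‖² - ‖w‖²) ≥ 0`. -/

open Matrix
open scoped ComplexOrder

theorem Matrix.dotProduct_star_self_eq_sum_normSq {n : Type*} [Fintype n] (v : n → ℂ) :
    star v ⬝ᵥ v = ((∑ i, Complex.normSq (v i) : ℝ) : ℂ) := by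
  simp [dotProduct, Complex.normSq_eq_conj_mul_self]

theorem Matrix.dotProduct_fromBlocks_mulVec_sumElim {l m α : Type*} [Fintype l] [Fintype m]
    [NonUnitalNonAssocSemiring α] [Star α] (A : Matrix l l α) (B : Matrix l m α)
    (C : Matrix m l α) (D : Matrix m m α) (x : l → α) (y : m → α) :
    star (Sum.elim x y) ⬝ᵥ (fromBlocks A B C D *ᵥ Sum.elim x y) =
      star x ⬝ᵥ (A *ᵥ x) + star x ⬝ᵥ (B *ᵥ y) + (star y ⬝ᵥ (C *ᵥ x) + star y ⬝ᵥ (D *ᵥ y)) := by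
  rw [fromBlocks_mulVec, Function.star_sumElim, sumElim_dotProduct_sumElim, dotProduct_add,
    dotProduct_add]
  rfl

theorem Matrix.star_dotProduct_conjTranspose_mulVec {m n α : Type*} [Fintype m] [Fintype n]
    [CommSemiring α] [StarRing α] (A : Matrix m n α) (x : n → α) (y : m → α) :
    star x ⬝ᵥ (Aᴴ *ᵥ y) = star (A *ᵥ x) ⬝ᵥ y := by
  rw [star_mulVec, dotProduct_mulVec]

theorem specNormLe.dotProduct_star_self_le {p q : ℕ} {δ : ℝ} {Z : Matrix (Fin p) (Fin q) ℂ}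
    (hZ : specNormLe δ Z) (v : Fin q → ℂ) :
    star (Z *ᵥ v) ⬝ᵥ (Z *ᵥ v) ≤ ((δ ^ 2 : ℝ) : ℂ) * (star v ⬝ᵥ v) := by
  rw [dotProduct_star_self_eq_sum_normSq, dotProduct_star_self_eq_sum_normSq, ← Complex.ofReal_mul,
    Complex.real_le_real]
  exact hZ v

theorem specNormLe.exists_smul_eq_mulVec {p q : ℕ} {δ : ℝ} {Z : Matrix (Fin p) (Fin q) ℂ}
    (hZ : specNormLe δ Z) (v : Fin q → ℂ) :
    ∃ w, (δ : ℂ) • w = Z *ᵥ v ∧ star w ⬝ᵥ w ≤ star v ⬝ᵥ v := by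
  have hZv := hZ.dotProduct_star_self_le v
  rcases eq_or_ne δ 0 with rfl | hδ
  · have hZv0 : Z *ᵥ v = 0 := dotProduct_star_self_eq_zero.mp
      (le_antisymm (by simpa using hZv) (dotProduct_star_self_nonneg _))
    exact ⟨0, by simp [hZv0], by simp [dotProduct_star_self_nonneg v]⟩
  · refine ⟨((δ⁻¹ : ℝ) : ℂ) • (Z *ᵥ v), ?_, ?_⟩
    · rw [smul_smul, ← Complex.ofReal_mul, mul_inv_cancel₀ hδ, Complex.ofReal_one, one_smul]
    · have hinv : ((δ⁻¹ : ℝ) : ℂ) * ((δ⁻¹ : ℝ) : ℂ) * ((δ ^ 2 : ℝ) : ℂ) = 1 := by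
        norm_cast; field_simp
      calc star (((δ⁻¹ : ℝ) : ℂ) • (Z *ᵥ v)) ⬝ᵥ (((δ⁻¹ : ℝ) : ℂ) • (Z *ᵥ v))
          = ((δ⁻¹ : ℝ) : ℂ) * ((δ⁻¹ : ℝ) : ℂ) * (star (Z *ᵥ v) ⬝ᵥ (Z *ᵥ v)) := by
            rw [star_smul, Complex.star_def, Complex.conj_ofReal, smul_dotProduct, dotProduct_smul,
              smul_eq_mul, smul_eq_mul, mul_assoc]
        _ ≤ ((δ⁻¹ : ℝ) : ℂ) * ((δ⁻¹ : ℝ) : ℂ) * (((δ ^ 2 : ℝ) : ℂ) * (star v ⬝ᵥ v)) := by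
            gcongr
            rw [← Complex.ofReal_mul]
            exact Complex.zero_le_real.mpr (mul_self_nonneg _)
        _ = star v ⬝ᵥ v := by rw [← mul_assoc, hinv, one_mul]

theorem star_dotProduct_sub_mulVec_eq_fromBlocks_add {l m n : Type*} [Fintype l] [Fintype m]
    [Fintype n] [DecidableEq m] (N : Matrix l l ℂ) (P : Matrix m l ℂ) (Q : Matrix n l ℂ)
    (Z : Matrix m n ℂ) (δ τ : ℝ) (x : l → ℂ) (w : m → ℂ) (hw : (δ : ℂ) • w = Z *ᵥ (Q *ᵥ x)) :
    star x ⬝ᵥ ((N - (Pᴴ * Z * Q + Qᴴ * Zᴴ * P)) *ᵥ x) =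
      star (Sum.elim x w) ⬝ᵥ (fromBlocks (N - (τ : ℂ) • (Qᴴ * Q)) (-(δ : ℂ) • Pᴴ)
        (-(δ : ℂ) • P) ((τ : ℂ) • 1) *ᵥ Sum.elim x w) +
      τ * (star (Q *ᵥ x) ⬝ᵥ (Q *ᵥ x) - star w ⬝ᵥ w) := by
  rw [dotProduct_fromBlocks_mulVec_sumElim, ← conjTranspose_mul, Matrix.mul_assoc]
  simp only [sub_mulVec, add_mulVec, smul_mulVec, ← mulVec_mulVec, one_mulVec, dotProduct_sub,
    dotProduct_add, dotProduct_smul, star_dotProduct_conjTranspose_mulVec]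
  rw [← hw, star_smul, Complex.star_def, Complex.conj_ofReal, dotProduct_smul, smul_dotProduct]
  simp only [smul_eq_mul]
  ring

theorem stmt_15_general (p q k : ℕ) (N : Matrix (Fin k) (Fin k) ℂ) (hN : N.IsHermitian)
    (P₁ : Matrix (Fin p) (Fin k) ℂ) (Q₁ : Matrix (Fin q) (Fin k) ℂ)
    (δ : ℝ) (τ : ℝ) (hτ : 0 ≤ τ)
    (hLMI : (Matrix.fromBlocks (N - (τ : ℂ) • (Q₁ᴴ * Q₁)) (-(δ : ℂ) • P₁ᴴ)
        (-(δ : ℂ) • P₁) ((τ : ℂ) • 1)).PosSemidef) :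
    ∀ Z : Matrix (Fin p) (Fin q) ℂ, specNormLe δ Z →
      (N - (P₁ᴴ * Z * Q₁ + Q₁ᴴ * Zᴴ * P₁)).PosSemidef := by
  intro Z hZ
  have hHerm : (P₁ᴴ * Z * Q₁ + Q₁ᴴ * Zᴴ * P₁).IsHermitian := by
    simpa [conjTranspose_mul, Matrix.mul_assoc] using isHermitian_add_transpose_self (P₁ᴴ * Z * Q₁)
  refine .of_dotProduct_mulVec_nonneg (hN.sub hHerm) fun x => ?_
  obtain ⟨w, hw, hw_le⟩ := hZ.exists_smul_eq_mulVec (Q₁ *ᵥ x)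
  rw [star_dotProduct_sub_mulVec_eq_fromBlocks_add N P₁ Q₁ Z δ τ x w hw]
  exact add_nonneg (hLMI.dotProduct_mulVec_nonneg _)
    (mul_nonneg (Complex.zero_le_real.mpr hτ) (sub_nonneg.mpr hw_le))

/-- Sufficiency direction of the one-constraint S-procedure LMI: if
`[[N - τ Q₁ᴴQ₁, -δ P₁ᴴ], [-δ P₁, τ I]] ⪰ 0` for some `τ ≥ 0`, then
`N ⪰ P₁ᴴ Z Q₁ + Q₁ᴴ Zᴴ P₁` for every `Z` with `‖Z‖ ≤ δ`. -/
theorem stmt_15 (p q k : ℕ) (N : Matrix (Fin k) (Fin k) ℂ) (hN : N.IsHermitian)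
    (P₁ : Matrix (Fin p) (Fin k) ℂ) (Q₁ : Matrix (Fin q) (Fin k) ℂ)
    (δ : ℝ) (hδ : 0 ≤ δ) (τ : ℝ) (hτ : 0 ≤ τ)
    (hLMI : (Matrix.fromBlocks (N - (τ : ℂ) • (Q₁ᴴ * Q₁)) (-(δ : ℂ) • P₁ᴴ)
        (-(δ : ℂ) • P₁) ((τ : ℂ) • 1)).PosSemidef) :
    ∀ Z : Matrix (Fin p) (Fin q) ℂ, specNormLe δ Z →
      (N - (P₁ᴴ * Z * Q₁ + Q₁ᴴ * Zᴴ * P₁)).PosSemidef :=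
  stmt_15_general p q k N hN P₁ Q₁ δ τ hτ hLMI
end

section
/- Complex S-procedure (one constraint, losslessness): let F₀, F₁ be Hermitian matrices on ℂ^k and suppose there exists y₀ with y₀^H F₁ y₀ > 0. Then (y^H F₁ y ≥ 0 implies y^H F₀ y ≥ 0, for all y) if and only if there exists τ ≥ 0 with F₀ − τ F₁ ⪰ 0. -/
open Matrix
open scoped ComplexOrder

/-!
If `y₁ᴴF₁y₁ > 0 > y₂ᴴF₁y₂`, choose a phase `c` that makes the `F₁`-cross term of `y₁ ± c y₂`
vanish and a modulus that makes `F₁` vanish on both vectors; by hypothesis `F₀` is nonnegative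
on both, and the parallelogram law turns this into
`(y₂ᴴF₁y₂)(y₁ᴴF₀y₁) ≤ (y₁ᴴF₁y₁)(y₂ᴴF₀y₂)`. Hence every ratio `yᴴF₀y / yᴴF₁y` with
`yᴴF₁y < 0` lies below every such ratio with `yᴴF₁y > 0`, and `τ` can be taken to be the
infimum of the latter ratios (a nonempty set, by the Slater condition).
-/

namespace Complex

theorem exists_norm_eq_re_mul_eq_zero (b : ℂ) {ρ : ℝ} (hρ : 0 ≤ ρ) :
    ∃ c : ℂ, ‖c‖ = ρ ∧ (c * b).re = 0 := by
  refine ⟨ρ * I * exp (-(arg b * I)), ?_, ?_⟩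
  · rw [norm_mul, norm_mul, ← neg_mul, ← ofReal_neg, norm_exp_ofReal_mul_I]
    simp [abs_of_nonneg hρ]
  · have hcb : ρ * I * exp (-(arg b * I)) * b = ρ * ‖b‖ * I := by
      nth_rewrite 2 [← norm_mul_exp_arg_mul_I b]
      rw [show ρ * I * exp (-(arg b * I)) * (‖b‖ * exp (arg b * I))
        = ρ * ‖b‖ * I * (exp (-(arg b * I)) * exp (arg b * I)) by ring, ← exp_add]
      simp
    simp [hcb]

end Complex

namespace Matrix

variable {n : Type*} [Fintype n]

theorem IsHermitian.star_dotProduct_mulVec_swap {M : Matrix n n ℂ} (hM : M.IsHermitian)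
    (z w : n → ℂ) : star w ⬝ᵥ (M *ᵥ z) = star (star z ⬝ᵥ (M *ᵥ w)) := by
  rw [star_dotProduct, star_mulVec, hM.eq, dotProduct_mulVec]

theorem star_add_smul_dotProduct_mulVec (M : Matrix n n ℂ) (z w : n → ℂ) (c : ℂ) :
    star (z + c • w) ⬝ᵥ (M *ᵥ (z + c • w)) =
      star z ⬝ᵥ (M *ᵥ z) + c * (star z ⬝ᵥ (M *ᵥ w)) + star c * (star w ⬝ᵥ (M *ᵥ z))
        + star c * c * (star w ⬝ᵥ (M *ᵥ w)) := by
  simp only [star_add, star_smul, mulVec_add, mulVec_smul, dotProduct_add, add_dotProduct,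
    dotProduct_smul, smul_dotProduct, smul_eq_mul]
  ring

theorem IsHermitian.re_star_add_smul_dotProduct_mulVec {M : Matrix n n ℂ} (hM : M.IsHermitian)
    (z w : n → ℂ) (c : ℂ) :
    (star (z + c • w) ⬝ᵥ (M *ᵥ (z + c • w))).re =
      (star z ⬝ᵥ (M *ᵥ z)).re + 2 * (c * (star z ⬝ᵥ (M *ᵥ w))).re
        + ‖c‖ ^ 2 * (star w ⬝ᵥ (M *ᵥ w)).re := by
  rw [star_add_smul_dotProduct_mulVec, hM.star_dotProduct_mulVec_swap z w, ← star_mul',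
    Complex.star_def, ← Complex.normSq_eq_conj_mul_self, Complex.normSq_eq_norm_sq]
  simp only [Complex.add_re, Complex.conj_re, Complex.re_ofReal_mul]
  ring

theorem re_star_dotProduct_mulVec_parallelogram (M : Matrix n n ℂ) (z w : n → ℂ) (c : ℂ) :
    (star (z + c • w) ⬝ᵥ (M *ᵥ (z + c • w))).re + (star (z - c • w) ⬝ᵥ (M *ᵥ (z - c • w))).re =
      2 * ((star z ⬝ᵥ (M *ᵥ z)).re + ‖c‖ ^ 2 * (star w ⬝ᵥ (M *ᵥ w)).re) := by
  rw [sub_eq_add_neg, ← neg_smul, star_add_smul_dotProduct_mulVec,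
    star_add_smul_dotProduct_mulVec, star_neg, neg_mul_neg,
    Complex.star_def, ← Complex.normSq_eq_conj_mul_self, Complex.normSq_eq_norm_sq]
  simp only [Complex.add_re, neg_mul, Complex.neg_re, Complex.re_ofReal_mul]
  linarith

theorem re_star_dotProduct_sub_smul_mulVec (A B : Matrix n n ℂ) (τ : ℝ) (y : n → ℂ) :
    (star y ⬝ᵥ ((A - (τ : ℂ) • B) *ᵥ y)).re =
      (star y ⬝ᵥ (A *ᵥ y)).re - τ * (star y ⬝ᵥ (B *ᵥ y)).re := by
  simp [sub_mulVec, smul_mulVec, dotProduct_sub, dotProduct_smul]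

theorem PosSemidef.of_re_dotProduct_mulVec_nonneg {A : Matrix n n ℂ} (hA : A.IsHermitian)
    (h : ∀ x, 0 ≤ (star x ⬝ᵥ (A *ᵥ x)).re) : A.PosSemidef :=
  .of_dotProduct_mulVec_nonneg hA fun x =>
    Complex.nonneg_iff.mpr ⟨h x, (hA.im_star_dotProduct_mulVec_self x).symm⟩

theorem IsHermitian.mul_re_star_dotProduct_mulVec_le {F₀ F₁ : Matrix n n ℂ}
    (hF₁ : F₁.IsHermitian)
    (himp : ∀ y, 0 ≤ (star y ⬝ᵥ (F₁ *ᵥ y)).re → 0 ≤ (star y ⬝ᵥ (F₀ *ᵥ y)).re)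
    {z w : n → ℂ} (hz : 0 < (star z ⬝ᵥ (F₁ *ᵥ z)).re) (hw : (star w ⬝ᵥ (F₁ *ᵥ w)).re < 0) :
    (star w ⬝ᵥ (F₁ *ᵥ w)).re * (star z ⬝ᵥ (F₀ *ᵥ z)).re ≤
      (star z ⬝ᵥ (F₁ *ᵥ z)).re * (star w ⬝ᵥ (F₀ *ᵥ w)).re := by
  obtain ⟨c, hc, hcross⟩ := Complex.exists_norm_eq_re_mul_eq_zero (star z ⬝ᵥ (F₁ *ᵥ w))
    (Real.sqrt_nonneg (-(star z ⬝ᵥ (F₁ *ᵥ z)).re / (star w ⬝ᵥ (F₁ *ᵥ w)).re))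
  have hc2 : ‖c‖ ^ 2 * (star w ⬝ᵥ (F₁ *ᵥ w)).re = -(star z ⬝ᵥ (F₁ *ᵥ z)).re := by
    rw [hc, Real.sq_sqrt (div_nonneg_of_nonpos (by linarith) hw.le), div_mul_cancel₀ _ hw.ne]
  have hplus : 0 ≤ (star (z + c • w) ⬝ᵥ (F₁ *ᵥ (z + c • w))).re := by
    rw [hF₁.re_star_add_smul_dotProduct_mulVec, hcross]
    linarith
  have hminus : 0 ≤ (star (z - c • w) ⬝ᵥ (F₁ *ᵥ (z - c • w))).re := by
    rw [sub_eq_add_neg, ← neg_smul, hF₁.re_star_add_smul_dotProduct_mulVec, norm_neg, neg_mul,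
      Complex.neg_re, hcross]
    linarith
  have hq : 0 ≤ (star z ⬝ᵥ (F₀ *ᵥ z)).re + ‖c‖ ^ 2 * (star w ⬝ᵥ (F₀ *ᵥ w)).re := by
    linarith [himp _ hplus, himp _ hminus, re_star_dotProduct_mulVec_parallelogram F₀ z w c]
  linear_combination mul_nonneg (neg_nonneg.mpr hw.le) hq - (star w ⬝ᵥ (F₀ *ᵥ w)).re * hc2

end Matrix

theorem exists_nonneg_mul_le_of_cross {X : Type*} (f₀ f₁ : X → ℝ)
    (himp : ∀ x, 0 ≤ f₁ x → 0 ≤ f₀ x) (hpos : ∃ x, 0 < f₁ x)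
    (hcross : ∀ z w, 0 < f₁ z → f₁ w < 0 → f₁ w * f₀ z ≤ f₁ z * f₀ w) :
    ∃ τ, 0 ≤ τ ∧ ∀ x, τ * f₁ x ≤ f₀ x := by
  set S := (fun x => f₀ x / f₁ x) '' {x | 0 < f₁ x}
  have hS : S.Nonempty := let ⟨x, hx⟩ := hpos; ⟨_, x, hx, rfl⟩
  have hS0 : ∀ r ∈ S, 0 ≤ r := by
    rintro _ ⟨x, hx, rfl⟩
    exact div_nonneg (himp x hx.le) hx.le
  refine ⟨sInf S, le_csInf hS hS0, fun x => ?_⟩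
  rcases lt_trichotomy (f₁ x) 0 with hx | hx | hx
  · have hratio : f₀ x / f₁ x ≤ sInf S := by
      refine le_csInf hS ?_
      rintro _ ⟨z, hz, rfl⟩
      rw [div_le_iff_of_neg hx, div_mul_eq_mul_div, div_le_iff₀ hz]
      linarith [hcross z x hz hx]
    exact (div_le_iff_of_neg hx).mp hratio
  · simpa [hx] using himp x hx.ge
  · exact (le_div_iff₀ hx).mp (csInf_le ⟨0, hS0⟩ ⟨x, hx, rfl⟩)

/-- Lossless complex S-procedure with one constraint: under the Slater condition
`∃ y₀, y₀ᴴ F₁ y₀ > 0`, the implication `yᴴF₁y ≥ 0 → yᴴF₀y ≥ 0` (for all `y`) holds iff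
`∃ τ ≥ 0, F₀ - τ F₁ ⪰ 0`. -/
theorem stmt_16 (k : ℕ) (F₀ F₁ : Matrix (Fin k) (Fin k) ℂ)
    (hF₀ : F₀.IsHermitian) (hF₁ : F₁.IsHermitian)
    (hSlater : ∃ y₀ : Fin k → ℂ, 0 < (star y₀ ⬝ᵥ (F₁ *ᵥ y₀)).re) :
    (∀ y : Fin k → ℂ, 0 ≤ (star y ⬝ᵥ (F₁ *ᵥ y)).re → 0 ≤ (star y ⬝ᵥ (F₀ *ᵥ y)).re)
    ↔ ∃ τ : ℝ, 0 ≤ τ ∧ (F₀ - (τ : ℂ) • F₁).PosSemidef := by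
  constructor
  · intro himp
    obtain ⟨τ, hτ, hle⟩ := exists_nonneg_mul_le_of_cross _ _ himp hSlater
      fun _ _ hz hw => hF₁.mul_re_star_dotProduct_mulVec_le himp hz hw
    refine ⟨τ, hτ, .of_re_dotProduct_mulVec_nonneg
      (hF₀.sub (hF₁.smul (Complex.conj_ofReal τ))) fun y => ?_⟩
    rw [re_star_dotProduct_sub_smul_mulVec]
    linarith [hle y]
  · rintro ⟨τ, hτ, hpsd⟩ y hy
    have h := hpsd.re_dotProduct_nonneg y
    rw [RCLike.re_to_complex, re_star_dotProduct_sub_smul_mulVec] at h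
    linarith [mul_nonneg hτ hy]
end
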